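/- In the agent-communication transition system, every configuration reachable by finitely many applications of transformations (1)–(3) from an initial configuration with no edges has an acyclic edge relation; in particular, transformation (2) never generates a directed cycle. -/

import Mathlib

/-- A configuration of the agent-communication transition system: a finite set of
nodes, the set of awake nodes (the remaining nodes are asleep), and a set of
directed edges. -/
structure Config where
  nodes : Finset ℕ
  awake : Finset ℕ
  edges : Finset (ℕ × ℕ)

/-- The outgoing edges of a node `x` in an edge set `E`. -/
def outEdges (E : Finset (ℕ × ℕ)) (x : ℕ) : Finset (ℕ × ℕ) :=
  E.filter (fun e => e.1 = x)

/-- The allowed transformations of the agent-communication transition system. -/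
inductive Step : Config → Config → Prop
  /-- (1) Add a fresh node `a`, marked awake (`st = true`) or asleep (`st = false`),
  with no incident edges. -/
  | addNode (K : Config) (a : ℕ) (st : Bool) (ha : a ∉ K.nodes) :
      Step K
        { nodes := insert a K.nodes
          awake := if st then insert a K.awake else K.awake
          edges := K.edges }
  /-- (2) Choose an awake node `a` and a nonempty set `B ⊆ A \ {a}`; add the edges
  `(a, b)` for every `b ∈ B`, mark `a` asleep and every `b ∈ B` awake, and for every
  `b ∈ B` that changes from asleep to awake delete all outgoing edges `(b, c)`. -/
  | send (K : Config) (a : ℕ) (B : Finset ℕ)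
      (haN : a ∈ K.nodes) (haW : a ∈ K.awake)
      (hB : B.Nonempty) (hBsub : B ⊆ K.nodes.erase a) :
      Step K
        { nodes := K.nodes
          awake := (K.awake.erase a) ∪ B
          edges := (K.edges.filter (fun e => ¬(e.1 ∈ B ∧ e.1 ∉ K.awake))) ∪
            B.image (fun b => (a, b)) }
  /-- (3) Choose an awake node `b`; mark it asleep, delete every edge `(x, b)`, and
  mark awake every node `x` whose out-degree thereby becomes zero. -/
  | sleep (K : Config) (b : ℕ) (hbN : b ∈ K.nodes) (hbW : b ∈ K.awake) :
      Step K
        { nodes := K.nodes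
          awake := (K.awake.erase b) ∪
            (K.nodes.filter (fun x =>
              (outEdges K.edges x).Nonempty ∧
              outEdges (K.edges.filter (fun e => e.2 ≠ b)) x = ∅))
          edges := K.edges.filter (fun e => e.2 ≠ b) }

/-- A configuration is deadlocked if its edge set is nonempty and every node is
asleep. -/
def Deadlocked (K : Config) : Prop :=
  K.edges.Nonempty ∧ ∀ x ∈ K.nodes, x ∉ K.awake

/-- Invariant: edge sources are nodes, awake nodes have no outgoing edges,
and the edge relation is acyclic. -/
def CfgInv (K : Config) : Prop :=
  (∀ e ∈ K.edges, e.1 ∈ K.nodes) ∧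
  (∀ e ∈ K.edges, e.1 ∉ K.awake) ∧
  (∀ x : ℕ, ¬ Relation.TransGen (fun u v : ℕ => (u, v) ∈ K.edges) x x)

lemma step_inv {K K' : Config} (h : CfgInv K) (hs : Step K K') : CfgInv K' := by
  obtain ⟨hsrc, hawk, hacy⟩ := h
  cases hs with
  | addNode a st ha =>
    refine ⟨fun e he => Finset.mem_insert_of_mem (hsrc e he), ?_, hacy⟩
    intro e he
    cases st with
    | false => simpa using hawk e he
    | true =>
      simp only [if_true]
      intro hmem
      rcases Finset.mem_insert.1 hmem with h1 | h1
      · exact ha (h1 ▸ hsrc e he)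
      · exact hawk e he h1
  | send a B haN haW hB hBsub =>
    set R := fun u v : ℕ => (u, v) ∈ K.edges with hR
    set E' := (K.edges.filter (fun e => ¬(e.1 ∈ B ∧ e.1 ∉ K.awake))) ∪
        B.image (fun b => (a, b)) with hE'
    set R' := fun u v : ℕ => (u, v) ∈ E' with hR'
    have hdecomp : ∀ u v : ℕ, R' u v → (R u v ∧ u ∉ B ∧ u ≠ a) ∨ (u = a ∧ v ∈ B) := by
      intro u v huv
      rcases Finset.mem_union.1 huv with hf | hi
      · rcases Finset.mem_filter.1 hf with ⟨hmem, hcond⟩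
        left
        refine ⟨hmem, ?_, ?_⟩
        · intro hub
          simp only [not_and, not_not] at hcond
          exact hawk _ hmem (hcond hub)
        · intro hua
          exact hawk _ hmem (hua ▸ haW)
      · rcases Finset.mem_image.1 hi with ⟨b, hb, heq⟩
        right
        injection heq with h1 h2
        subst h1; subst h2
        exact ⟨rfl, hb⟩
    have hnoB : ∀ u v : ℕ, R' u v → u ∉ B := by
      intro u v huv hub
      rcases hdecomp u v huv with ⟨_, h2, _⟩ | ⟨hua, _⟩
      · exact h2 hub
      · exact Finset.ne_of_mem_erase (hBsub (hua ▸ hub)) rfl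
    have key : ∀ u v : ℕ, Relation.TransGen R' u v → v ∈ B ∨ Relation.TransGen R u v := by
      intro u v huv
      induction huv with
      | single h1 =>
        rcases hdecomp _ _ h1 with ⟨h2, _, _⟩ | ⟨_, h2⟩
        · exact Or.inr (Relation.TransGen.single h2)
        · exact Or.inl h2
      | tail hab hbc ih =>
        rcases hdecomp _ _ hbc with ⟨h2, h3, _⟩ | ⟨hva, hwB⟩
        · rcases ih with hvB | htg
          · exact absurd hvB h3
          · exact Or.inr (htg.tail h2)
        · exact Or.inl hwB
    refine ⟨?_, ?_, ?_⟩
    · intro e he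
      rcases Finset.mem_union.1 he with hf | hi
      · exact hsrc e (Finset.mem_filter.1 hf).1
      · rcases Finset.mem_image.1 hi with ⟨b, hb, heq⟩
        cases heq; exact haN
    · intro e he hmem
      rcases hdecomp e.1 e.2 he with ⟨h2, h3, h4⟩ | ⟨hea, heB⟩
      · rcases Finset.mem_union.1 hmem with hw | hw
        · exact hawk e h2 (Finset.mem_of_mem_erase hw)
        · exact h3 hw
      · rcases Finset.mem_union.1 hmem with hw | hw
        · exact (Finset.mem_erase.1 hw).1 hea
        · exact Finset.ne_of_mem_erase (hBsub (hea ▸ hw)) rfl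
    · intro x hcyc
      obtain ⟨y, hxy, -⟩ := Relation.TransGen.head'_iff.1 hcyc
      rcases key x x hcyc with hxB | htg
      · exact hnoB x y hxy hxB
      · exact hacy x htg
  | sleep b hbN hbW =>
    refine ⟨?_, ?_, ?_⟩
    · intro e he
      exact hsrc e (Finset.mem_filter.1 he).1
    · intro e he hmem
      rcases Finset.mem_union.1 hmem with hw | hw
      · exact hawk e (Finset.mem_filter.1 he).1 (Finset.mem_of_mem_erase hw)
      · have hout := (Finset.mem_filter.1 hw).2.2
        have : e ∈ outEdges (K.edges.filter (fun e => e.2 ≠ b)) e.1 :=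
          Finset.mem_filter.2 ⟨he, rfl⟩
        rw [hout] at this
        exact absurd this (Finset.notMem_empty e)
    · intro x hcyc
      refine hacy x (Relation.TransGen.mono ?_ x x hcyc)
      intro u v huv
      exact (Finset.mem_filter.1 huv).1

/-- Every configuration reachable by finitely many applications of
transformations (1)–(3) from an initial configuration with no edges has an acyclic
edge relation (no nonempty closed directed walk); in particular, transformation (2)
never generates a directed cycle. -/
theorem reachable_edges_acyclic (K₀ K : Config)
    (h0edges : K₀.edges = ∅) (h0awake : K₀.awake ⊆ K₀.nodes)
    (hreach : Relation.ReflTransGen Step K₀ K) :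
    ∀ x : ℕ, ¬ Relation.TransGen (fun u v : ℕ => (u, v) ∈ K.edges) x x := by
  have hinv : CfgInv K := by
    induction hreach with
    | refl =>
      refine ⟨?_, ?_, ?_⟩
      · intro e he; rw [h0edges] at he; exact absurd he (Finset.notMem_empty e)
      · intro e he; rw [h0edges] at he; exact absurd he (Finset.notMem_empty e)
      · intro x hcyc
        obtain ⟨y, h1, -⟩ := Relation.TransGen.head'_iff.1 hcyc
        rw [h0edges] at h1; exact absurd h1 (Finset.notMem_empty _)
    | tail _ hstep ih => exact step_inv ih hstep
  exact hinv.2.2
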